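/- arXiv:2412.17798 — 4 statements merged into one kernel-verified Lean document; each statement's English description precedes it below -/
import Mathlib

section
/- The map φ(w,h) = (w ∘ h^M, L h^{-1}, h^{-1}) is a bijection from ker(C) × (ℂ*)^n onto the incidence variety {(κ,b,x) ∈ ℂ^m × ℂ^d × (ℂ*)^n : C(κ ∘ x^M) = 0 and Lx - b = 0}, where ∘ denotes componentwise multiplication, h^M denotes the vector of Laurent monomials with exponent vectors the columns of M, and h^{-1} is taken componentwise. -/
open Matrix

/-- The vector of Laurent monomials with exponent vectors the columns of `M`. -/
noncomputable def monC {n m : ℕ} (M : Matrix (Fin n) (Fin m) ℤ) (h : Fin n → ℂ) :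
    Fin m → ℂ :=
  fun j => ∏ i, h i ^ (M i j)

/-! The inverse of `φ` is `(κ, b, x) ↦ (κ ∘ x^M, x⁻¹)`: on the torus `h ↦ h^M` is a group
homomorphism, so multiplying by `h^M` and by `(h⁻¹)^M` cancel, and the kernel condition on `w`
is the incidence condition on `w ∘ h^M` at the point `h⁻¹`. -/

section monC

variable {n m : ℕ} (M : Matrix (Fin n) (Fin m) ℤ)

theorem monC_inv (h : Fin n → ℂ) : monC M h⁻¹ = (monC M h)⁻¹ := by
  funext j
  simp only [monC, Pi.inv_apply, _root_.inv_zpow, Finset.prod_inv_distrib]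

theorem monC_ne_zero {h : Fin n → ℂ} (hh : ∀ i, h i ≠ 0) (j : Fin m) : monC M h j ≠ 0 :=
  Finset.prod_ne_zero_iff.mpr fun i _ => zpow_ne_zero _ (hh i)

theorem mul_monC_mul_monC_inv (w : Fin m → ℂ) {h : Fin n → ℂ} (hh : ∀ i, h i ≠ 0) :
    w * monC M h * monC M h⁻¹ = w := by
  funext j
  simp only [monC_inv, Pi.mul_apply, Pi.inv_apply, mul_inv_cancel_right₀ (monC_ne_zero M hh j)]

end monC

/-- φ(w,h) = (w ∘ h^M, L h⁻¹, h⁻¹) is a bijection from ker(C) × (ℂ*)^n onto the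
incidence variety. -/
theorem phi_bijOn_incidence_variety {s m n d : ℕ}
    (C : Matrix (Fin s) (Fin m) ℝ) (M : Matrix (Fin n) (Fin m) ℤ)
    (L : Matrix (Fin d) (Fin n) ℝ) :
    Set.BijOn
      (fun p : (Fin m → ℂ) × (Fin n → ℂ) =>
        ((p.1 * monC M p.2 : Fin m → ℂ),
          (L.map (Complex.ofReal)) *ᵥ (fun i => (p.2 i)⁻¹),
          fun i => (p.2 i)⁻¹))
      {p : (Fin m → ℂ) × (Fin n → ℂ) |
        (C.map (Complex.ofReal)) *ᵥ p.1 = 0 ∧ ∀ i, p.2 i ≠ 0}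
      {q : (Fin m → ℂ) × (Fin d → ℂ) × (Fin n → ℂ) |
        (∀ i, q.2.2 i ≠ 0) ∧
        (C.map (Complex.ofReal)) *ᵥ (q.1 * monC M q.2.2) = 0 ∧
        (L.map (Complex.ofReal)) *ᵥ q.2.2 - q.2.1 = 0} := by
  let ψ : (Fin m → ℂ) × (Fin d → ℂ) × (Fin n → ℂ) → (Fin m → ℂ) × (Fin n → ℂ) :=
    fun q => (q.1 * monC M q.2.2, q.2.2⁻¹)
  refine Set.InvOn.bijOn (f' := ψ) ⟨?leftInv, ?rightInv⟩ ?mapsTo ?mapsTo_inv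
  case leftInv =>
    rintro ⟨w, h⟩ ⟨-, hh⟩
    exact Prod.ext (mul_monC_mul_monC_inv M w hh) (inv_inv h)
  case rightInv =>
    rintro ⟨κ, b, x⟩ ⟨hx, -, hL⟩
    have hxx : x⁻¹⁻¹ = x := inv_inv x
    refine Prod.ext ?_ (Prod.ext ?_ hxx)
    · exact mul_monC_mul_monC_inv M κ hx
    · exact (congrArg _ hxx).trans (sub_eq_zero.mp hL)
  case mapsTo =>
    rintro ⟨w, h⟩ ⟨hC, hh⟩
    exact ⟨fun i => inv_ne_zero (hh i),
      (congrArg _ (mul_monC_mul_monC_inv M w hh)).trans hC, sub_self _⟩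
  case mapsTo_inv =>
    rintro ⟨κ, b, x⟩ ⟨hx, hC, -⟩
    exact ⟨hC, fun i => inv_ne_zero (hx i)⟩
end

section
/- The map φ(w,h) = (w ∘ h^M, L h^{-1}, h^{-1}) restricts to a bijection from (ker(C) ∩ ℝ^m_{>0}) × ℝ^n_{>0} onto the positive incidence variety {(κ,b,x) ∈ ℝ^m_{>0} × ℝ^d × ℝ^n_{>0} : C(κ ∘ x^M) = 0 and Lx - b = 0}. -/
/-! On the incidence variety `φ` has the explicit inverse `(κ, b, x) ↦ (κ ∘ x^M, x⁻¹)`: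
the monomial factors cancel because `(x⁻¹)^M = (x^M)⁻¹`, and `b = L x` carries no information. -/

open Matrix

/-- The vector of Laurent monomials with exponent vectors the columns of `M`. -/
noncomputable def monR {n m : ℕ} (M : Matrix (Fin n) (Fin m) ℤ) (h : Fin n → ℝ) :
    Fin m → ℝ :=
  fun j => ∏ i, h i ^ (M i j)

section monR

variable {n m : ℕ} (M : Matrix (Fin n) (Fin m) ℤ) {h : Fin n → ℝ}

theorem monR_inv : monR M h⁻¹ = (monR M h)⁻¹ := by
  funext j
  simp [monR, Finset.prod_inv_distrib]

theorem monR_pos (hh : ∀ i, 0 < h i) (j : Fin m) : 0 < monR M h j :=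
  Finset.prod_pos fun i _ => zpow_pos (hh i) _

theorem monR_ne_zero (hh : ∀ i, h i ≠ 0) (j : Fin m) : monR M h j ≠ 0 :=
  Finset.prod_ne_zero_iff.mpr fun i _ => zpow_ne_zero _ (hh i)

theorem mul_monR_mul_monR_inv (w : Fin m → ℝ) (hh : ∀ i, h i ≠ 0) :
    w * monR M h * monR M h⁻¹ = w := by
  funext j
  rw [monR_inv, Pi.mul_apply, Pi.mul_apply, Pi.inv_apply,
    mul_inv_cancel_right₀ (monR_ne_zero M hh j)]

end monR

/-- φ(w,h) = (w ∘ h^M, L h⁻¹, h⁻¹) restricts to a bijection from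
(ker(C) ∩ ℝ^m_{>0}) × ℝ^n_{>0} onto the positive incidence variety. -/
theorem phi_bijOn_positive_incidence_variety {s m n d : ℕ}
    (C : Matrix (Fin s) (Fin m) ℝ) (M : Matrix (Fin n) (Fin m) ℤ)
    (L : Matrix (Fin d) (Fin n) ℝ) :
    Set.BijOn
      (fun p : (Fin m → ℝ) × (Fin n → ℝ) =>
        ((p.1 * monR M p.2 : Fin m → ℝ),
          L *ᵥ (fun i => (p.2 i)⁻¹),
          fun i => (p.2 i)⁻¹))
      {p : (Fin m → ℝ) × (Fin n → ℝ) |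
        C *ᵥ p.1 = 0 ∧ (∀ j, 0 < p.1 j) ∧ ∀ i, 0 < p.2 i}
      {q : (Fin m → ℝ) × (Fin d → ℝ) × (Fin n → ℝ) |
        (∀ j, 0 < q.1 j) ∧ (∀ i, 0 < q.2.2 i) ∧
        C *ᵥ (q.1 * monR M q.2.2) = 0 ∧
        L *ᵥ q.2.2 - q.2.1 = 0} := by
  refine Set.InvOn.bijOn (f' := fun q => (q.1 * monR M q.2.2, q.2.2⁻¹)) ⟨?_, ?_⟩ ?_ ?_
  · rintro ⟨w, h⟩ ⟨-, -, hh⟩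
    simp only [Prod.mk.injEq]
    exact ⟨mul_monR_mul_monR_inv M w fun i => (hh i).ne', inv_inv h⟩
  · rintro ⟨κ, b, x⟩ ⟨-, hx, -, hL⟩
    simp only [Prod.mk.injEq, Pi.inv_apply, inv_inv]
    exact ⟨mul_monR_mul_monR_inv M κ fun i => (hx i).ne', sub_eq_zero.mp hL, trivial⟩
  · rintro ⟨w, h⟩ ⟨hC, hw, hh⟩
    refine ⟨fun j => mul_pos (hw j) (monR_pos M hh j), fun i => inv_pos.mpr (hh i), ?_,
      sub_self _⟩
    rw [← hC]
    exact congrArg (C *ᵥ ·) (mul_monR_mul_monR_inv M w fun i => (hh i).ne')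
  · rintro ⟨κ, b, x⟩ ⟨hκ, hx, hC, -⟩
    exact ⟨hC, fun j => mul_pos (hκ j) (monR_pos M hx j), fun i => inv_pos.mpr (hx i)⟩
end

section
/- Let N ∈ ℝ^{n×m}, M ∈ ℝ^{n×m}, L ∈ ℝ^{d×n} with d = n - rank(N), and suppose the rows of L span the left kernel of N. If there exist w ∈ ker(N) and h ∈ (ℝ*)^n such that the block matrix [N diag(w) M^T diag(h); L] has rank n, then there exists w' ∈ ker(N) such that N diag(w') M^T has rank equal to rank(N). -/
open Matrix

/-!
The rank of a stacked matrix is at most the sum of the ranks of its blocks. Since `diag(h)` is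
invertible and `L` has only `d = n - rank N` rows, full rank `n` of `[N diag(w) Mᵀ diag(h); L]`
forces `rank (N diag(w) Mᵀ) ≥ rank N`; the reverse inequality holds because `N` is a left factor.
-/

namespace Matrix

variable {K : Type*} [Field K] {k a b : Type*}

theorem rank_fromCols_le [Fintype a] [Fintype b] (A : Matrix k a K) (B : Matrix k b K) :
    (fromCols A B).rank ≤ A.rank + B.rank := by
  have hrange : LinearMap.range (fromCols A B).mulVecLin ≤
      LinearMap.range A.mulVecLin ⊔ LinearMap.range B.mulVecLin := by
    rintro x ⟨v, rfl⟩
    rw [mulVecLin_apply, ← Sum.elim_comp_inl_inr v, fromCols_mulVec_sumElim]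
    exact Submodule.add_mem_sup ⟨_, rfl⟩ ⟨_, rfl⟩
  exact (Submodule.finrank_mono hrange).trans
    (Submodule.finrank_add_le_finrank_add_finrank _ _)

theorem rank_fromRows_le [Fintype k] [Fintype a] [Fintype b] (A : Matrix a k K) (B : Matrix b k K) :
    (fromRows A B).rank ≤ A.rank + B.rank := by
  rw [← rank_transpose, transpose_fromRows, ← rank_transpose A, ← rank_transpose B]
  exact rank_fromCols_le _ _

theorem rank_mul_diagonal_of_ne_zero [Fintype k] [DecidableEq k] (A : Matrix a k K) {h : k → K}
    (hh : ∀ i, h i ≠ 0) : (A * diagonal h).rank = A.rank := by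
  refine rank_mul_eq_left_of_isUnit_det _ _ ?_
  rw [det_diagonal]
  exact (Finset.prod_ne_zero_iff.mpr fun i _ => hh i).isUnit

end Matrix

theorem nondeg_augmented_implies_nondeg_general {n m d : ℕ}
    (N M : Matrix (Fin n) (Fin m) ℝ) (L : Matrix (Fin d) (Fin n) ℝ)
    (hd : d = n - N.rank)
    (hyp : ∃ (w : Fin m → ℝ) (h : Fin n → ℝ), N *ᵥ w = 0 ∧ (∀ i, h i ≠ 0) ∧
      (Matrix.fromRows (N * Matrix.diagonal w * Mᵀ * Matrix.diagonal h) L).rank = n) :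
    ∃ w' : Fin m → ℝ, N *ᵥ w' = 0 ∧ (N * Matrix.diagonal w' * Mᵀ).rank = N.rank := by
  obtain ⟨w, h, hw, hh, hrank⟩ := hyp
  refine ⟨w, hw, le_antisymm ?_ ?_⟩
  · rw [Matrix.mul_assoc]
    exact rank_mul_le_left _ _
  · have hstack := rank_fromRows_le (N * diagonal w * Mᵀ * diagonal h) L
    rw [hrank, rank_mul_diagonal_of_ne_zero _ hh] at hstack
    have hL : L.rank ≤ d := rank_le_height L
    have hN : N.rank ≤ n := rank_le_height N
    omega

/-- Nondegeneracy of the augmented steady state system implies nondegeneracy of the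
steady state system. -/
theorem nondeg_augmented_implies_nondeg {n m d : ℕ}
    (N M : Matrix (Fin n) (Fin m) ℝ) (L : Matrix (Fin d) (Fin n) ℝ)
    (hd : d = n - N.rank)
    (hL : ∀ v : Fin n → ℝ, v ᵥ* N = 0 ↔ ∃ u : Fin d → ℝ, u ᵥ* L = v)
    (hyp : ∃ (w : Fin m → ℝ) (h : Fin n → ℝ), N *ᵥ w = 0 ∧ (∀ i, h i ≠ 0) ∧
      (Matrix.fromRows (N * Matrix.diagonal w * Mᵀ * Matrix.diagonal h) L).rank = n) :
    ∃ w' : Fin m → ℝ, N *ᵥ w' = 0 ∧ (N * Matrix.diagonal w' * Mᵀ).rank = N.rank :=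
  nondeg_augmented_implies_nondeg_general N M L hd hyp
end

section
/- Consider f_κ(x₁,x₂) = (-κ₁x₁x₂ + κ₂x₂² + κ₃x₂, κ₁x₁x₂ - κ₄x₂² - κ₅x₂) with all κᵢ > 0. If κ₂ ≠ κ₄, κ₂κ₅ - κ₃κ₄ and κ₅ - κ₃ have the same sign as κ₂ - κ₄, then the positive zero set is the single point ((κ₂κ₅ - κ₃κ₄)/(κ₁(κ₂ - κ₄)), (κ₅ - κ₃)/(κ₂ - κ₄)). If κ₂ = κ₄ and κ₃ = κ₅, then the positive zero set equals {((κ₂x₂ + κ₃)/κ₁, x₂) : x₂ > 0}, which is infinite. -/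
/-! On the positive quadrant both components of `f_κ` carry the factor `x₂ > 0`, so the positive
zero set is the intersection of the two lines `κ₁x₁ = κ₂x₂ + κ₃` and `κ₁x₁ = κ₄x₂ + κ₅` with the
open quadrant. For `κ₂ ≠ κ₄` the lines meet in one point, which the sign conditions place in the
quadrant; for `(κ₂, κ₃) = (κ₄, κ₅)` they coincide, and every point of the line with `x₂ > 0`
is a positive zero. -/

open Set

def positiveZeroSet (κ₁ κ₂ κ₃ κ₄ κ₅ : ℝ) : Set (ℝ × ℝ) :=
  {p | 0 < p.1 ∧ 0 < p.2 ∧ -κ₁ * p.1 * p.2 + κ₂ * p.2 ^ 2 + κ₃ * p.2 = 0 ∧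
    κ₁ * p.1 * p.2 - κ₄ * p.2 ^ 2 - κ₅ * p.2 = 0}

section

variable {κ₁ κ₂ κ₃ κ₄ κ₅ : ℝ}

lemma mem_positiveZeroSet_iff {p : ℝ × ℝ} :
    p ∈ positiveZeroSet κ₁ κ₂ κ₃ κ₄ κ₅ ↔
      0 < p.1 ∧ 0 < p.2 ∧ κ₁ * p.1 = κ₂ * p.2 + κ₃ ∧ κ₁ * p.1 = κ₄ * p.2 + κ₅ := by
  obtain ⟨x, y⟩ := p
  have hf₁ : -κ₁ * x * y + κ₂ * y ^ 2 + κ₃ * y = y * (κ₂ * y + κ₃ - κ₁ * x) := by ring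
  have hf₂ : κ₁ * x * y - κ₄ * y ^ 2 - κ₅ * y = y * (κ₁ * x - (κ₄ * y + κ₅)) := by ring
  simp only [positiveZeroSet, mem_ofPred_eq, hf₁, hf₂]
  refine and_congr_right fun _ => and_congr_right fun hy => ?_
  simp only [mul_eq_zero, hy.ne', false_or, sub_eq_zero, eq_comm (a := κ₂ * y + κ₃)]

lemma linear_pair_eq_iff {a b c d e x y : ℝ} (ha : a ≠ 0) (hbd : b ≠ d) :
    (a * x = b * y + c ∧ a * x = d * y + e) ↔
      (x = (b * e - c * d) / (a * (b - d)) ∧ y = (e - c) / (b - d)) := by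
  have hbd' : b - d ≠ 0 := sub_ne_zero.2 hbd
  constructor
  · rintro ⟨h₁, h₂⟩
    have hy : y * (b - d) = e - c := by linear_combination h₂ - h₁
    refine ⟨?_, (eq_div_iff hbd').2 hy⟩
    rw [eq_div_iff (mul_ne_zero ha hbd')]
    linear_combination (b - d) * h₁ + b * hy
  · rintro ⟨rfl, rfl⟩
    constructor <;> field_simp <;> ring

lemma div_pos_of_mul_pos {a b : ℝ} (h : 0 < b * a) : 0 < a / b :=
  div_pos_iff.2 (mul_pos_iff.1 (mul_comm b a ▸ h))

lemma positiveZeroSet_eq_singleton (hκ₁ : 0 < κ₁) (hne : κ₂ ≠ κ₄)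
    (hx : 0 < (κ₂ - κ₄) * (κ₂ * κ₅ - κ₃ * κ₄)) (hy : 0 < (κ₂ - κ₄) * (κ₅ - κ₃)) :
    positiveZeroSet κ₁ κ₂ κ₃ κ₄ κ₅ =
      {((κ₂ * κ₅ - κ₃ * κ₄) / (κ₁ * (κ₂ - κ₄)), (κ₅ - κ₃) / (κ₂ - κ₄))} := by
  ext ⟨x, y⟩
  simp only [mem_positiveZeroSet_iff, linear_pair_eq_iff hκ₁.ne' hne, mem_singleton_iff,
    Prod.mk.injEq]
  constructor
  · rintro ⟨-, -, h⟩
    exact h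
  · rintro ⟨rfl, rfl⟩
    refine ⟨?_, div_pos_of_mul_pos hy, rfl, rfl⟩
    rw [div_mul_eq_div_div_swap]
    exact div_pos (div_pos_of_mul_pos hx) hκ₁

lemma positiveZeroSet_self (hκ₁ : 0 < κ₁) (hκ₂ : 0 ≤ κ₂) (hκ₃ : 0 < κ₃) :
    positiveZeroSet κ₁ κ₂ κ₃ κ₂ κ₃ = {p | p.1 = (κ₂ * p.2 + κ₃) / κ₁ ∧ 0 < p.2} := by
  ext ⟨x, y⟩
  simp only [mem_positiveZeroSet_iff, mem_ofPred_eq, and_self]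
  constructor
  · rintro ⟨-, hy, h⟩
    exact ⟨by rw [eq_div_iff hκ₁.ne', mul_comm, h], hy⟩
  · rintro ⟨rfl, hy⟩
    exact ⟨by positivity, hy, by field_simp⟩

end

lemma infinite_setOf_fst_eq_of_infinite {α β : Type*} {s : Set β} (hs : s.Infinite) (g : β → α) :
    {p : α × β | p.1 = g p.2 ∧ p.2 ∈ s}.Infinite := by
  refine Infinite.of_image Prod.snd ?_
  convert hs
  ext y
  exact ⟨by rintro ⟨p, ⟨-, hp⟩, rfl⟩; exact hp, fun hy => ⟨(g y, y), ⟨rfl, hy⟩, rfl⟩⟩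

theorem generic_ACR_not_ACR_general (κ₁ κ₂ κ₃ κ₄ κ₅ : ℝ)
    (h1 : 0 < κ₁) (h2 : 0 < κ₂) (h3 : 0 < κ₃) :
    ((κ₂ ≠ κ₄ → 0 < (κ₂ - κ₄) * (κ₂ * κ₅ - κ₃ * κ₄) → 0 < (κ₂ - κ₄) * (κ₅ - κ₃) →
      {p : ℝ × ℝ | 0 < p.1 ∧ 0 < p.2 ∧
          -κ₁ * p.1 * p.2 + κ₂ * p.2 ^ 2 + κ₃ * p.2 = 0 ∧
          κ₁ * p.1 * p.2 - κ₄ * p.2 ^ 2 - κ₅ * p.2 = 0}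
        = {((κ₂ * κ₅ - κ₃ * κ₄) / (κ₁ * (κ₂ - κ₄)), (κ₅ - κ₃) / (κ₂ - κ₄))}) ∧
    (κ₂ = κ₄ → κ₃ = κ₅ →
      {p : ℝ × ℝ | 0 < p.1 ∧ 0 < p.2 ∧
          -κ₁ * p.1 * p.2 + κ₂ * p.2 ^ 2 + κ₃ * p.2 = 0 ∧
          κ₁ * p.1 * p.2 - κ₄ * p.2 ^ 2 - κ₅ * p.2 = 0}
        = {p : ℝ × ℝ | p.1 = (κ₂ * p.2 + κ₃) / κ₁ ∧ 0 < p.2} ∧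
      {p : ℝ × ℝ | 0 < p.1 ∧ 0 < p.2 ∧
          -κ₁ * p.1 * p.2 + κ₂ * p.2 ^ 2 + κ₃ * p.2 = 0 ∧
          κ₁ * p.1 * p.2 - κ₄ * p.2 ^ 2 - κ₅ * p.2 = 0}.Infinite)) := by
  refine ⟨positiveZeroSet_eq_singleton h1, ?_⟩
  rintro rfl rfl
  have hline := positiveZeroSet_self h1 h2.le h3
  refine ⟨hline, ?_⟩
  change (positiveZeroSet κ₁ κ₂ κ₃ κ₂ κ₃).Infinite
  rw [hline]
  exact infinite_setOf_fst_eq_of_infinite (Ioi_infinite (0 : ℝ)) fun t => (κ₂ * t + κ₃) / κ₁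

/-- Generic ACR does not imply ACR: for the system
f_κ = (-κ₁x₁x₂ + κ₂x₂² + κ₃x₂, κ₁x₁x₂ - κ₄x₂² - κ₅x₂), the positive zero set is a
single point under the generic sign conditions, but is infinite when κ₂ = κ₄, κ₃ = κ₅. -/
theorem generic_ACR_not_ACR (κ₁ κ₂ κ₃ κ₄ κ₅ : ℝ)
    (h1 : 0 < κ₁) (h2 : 0 < κ₂) (h3 : 0 < κ₃) (h4 : 0 < κ₄) (h5 : 0 < κ₅) :
    ((κ₂ ≠ κ₄ → 0 < (κ₂ - κ₄) * (κ₂ * κ₅ - κ₃ * κ₄) → 0 < (κ₂ - κ₄) * (κ₅ - κ₃) →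
      {p : ℝ × ℝ | 0 < p.1 ∧ 0 < p.2 ∧
          -κ₁ * p.1 * p.2 + κ₂ * p.2 ^ 2 + κ₃ * p.2 = 0 ∧
          κ₁ * p.1 * p.2 - κ₄ * p.2 ^ 2 - κ₅ * p.2 = 0}
        = {((κ₂ * κ₅ - κ₃ * κ₄) / (κ₁ * (κ₂ - κ₄)), (κ₅ - κ₃) / (κ₂ - κ₄))}) ∧
    (κ₂ = κ₄ → κ₃ = κ₅ →
      {p : ℝ × ℝ | 0 < p.1 ∧ 0 < p.2 ∧
          -κ₁ * p.1 * p.2 + κ₂ * p.2 ^ 2 + κ₃ * p.2 = 0 ∧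
          κ₁ * p.1 * p.2 - κ₄ * p.2 ^ 2 - κ₅ * p.2 = 0}
        = {p : ℝ × ℝ | p.1 = (κ₂ * p.2 + κ₃) / κ₁ ∧ 0 < p.2} ∧
      {p : ℝ × ℝ | 0 < p.1 ∧ 0 < p.2 ∧
          -κ₁ * p.1 * p.2 + κ₂ * p.2 ^ 2 + κ₃ * p.2 = 0 ∧
          κ₁ * p.1 * p.2 - κ₄ * p.2 ^ 2 - κ₅ * p.2 = 0}.Infinite)) :=
  generic_ACR_not_ACR_general κ₁ κ₂ κ₃ κ₄ κ₅ h1 h2 h3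
end
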